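/- For every B-DMC W with finite output alphabet, I(W) + Z(W) ≥ 1. -/

import Mathlib

open Finset Real

/-- A binary-input discrete memoryless channel (B-DMC): nonnegative entries
and each row (fixed input) sums to 1. -/
def IsBDMC {Y : Type*} [Fintype Y] (W : Y → ZMod 2 → ℝ) : Prop :=
  (∀ y x, 0 ≤ W y x) ∧ (∀ x, ∑ y, W y x = 1)

/-- Bhattacharyya parameter Z(W). -/
noncomputable def bhatt {Y : Type*} [Fintype Y] (W : Y → ZMod 2 → ℝ) : ℝ :=
  ∑ y, Real.sqrt (W y 0 * W y 1)

/-- Symmetric capacity I(W). -/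
noncomputable def symCap {Y : Type*} [Fintype Y] (W : Y → ZMod 2 → ℝ) : ℝ :=
  ∑ y, ∑ x : ZMod 2,
    (1 / 2) * W y x * Real.logb 2 (W y x / ((1 / 2) * (W y 0 + W y 1)))

/-!
Write `a = W(y|0)`, `b = W(y|1)`. Since `∑ y, (a + b) / 2 = 1`, it suffices to prove for each
output letter `(a + b) log (a + b) - a log a - b log b ≤ 2 log 2 · √(ab)`, which in bits is the
binary entropy bound `h(p) ≤ 2 √(p (1 - p))`. By symmetry and homogeneity take `a = 1 ≥ b = x`.
Then `((1 + x) log (1 + x) - x log x) / √x` is nondecreasing on `(0, 1]` and equals `2 log 2` at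
`x = 1`: its derivative has the sign of `x log (1 / x) - (1 - x) log (1 + x)`, and
`(1 - x) log (1 + x) ≤ (1 - x) x ≤ x log (1 / x)` because `log t ≤ t - 1`.
-/

lemma one_sub_mul_log_one_add_le_neg_mul_log {x : ℝ} (h0 : 0 ≤ x) (h1 : x ≤ 1) :
    (1 - x) * log (1 + x) ≤ -(x * log x) := by
  rcases h0.eq_or_lt with rfl | hx
  · simp
  calc (1 - x) * log (1 + x) ≤ (1 - x) * x :=
        mul_le_mul_of_nonneg_left (by linarith [log_le_sub_one_of_pos (by linarith : 0 < 1 + x)])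
          (by linarith)
    _ ≤ -(x * log x) := by nlinarith [log_le_sub_one_of_pos hx]

lemma hasDerivAt_one_add_mul_log_one_add_sub_mul_log_div_sqrt {x : ℝ} (hx : 0 < x) :
    HasDerivAt (fun x ↦ ((1 + x) * log (1 + x) - x * log x) / √x)
      (((x - 1) * log (1 + x) - x * log x) / (2 * x * √x)) x := by
  have hx1 : 1 + x ≠ 0 := by positivity
  have hshift : HasDerivAt (fun x ↦ (1 + x) * log (1 + x)) (log (1 + x) + 1) x := by
    simpa [Function.comp_def] using (hasDerivAt_mul_log hx1).comp x ((hasDerivAt_id x).const_add 1)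
  refine ((hshift.fun_sub (hasDerivAt_mul_log hx.ne')).fun_div (hasDerivAt_sqrt hx.ne')
    (sqrt_pos.2 hx).ne').congr_deriv ?_
  have hsx := sqrt_pos.2 hx
  rw [sq_sqrt hx.le]
  field_simp
  rw [sq_sqrt hx.le]
  ring

lemma one_add_mul_log_one_add_sub_mul_log_le {x : ℝ} (h0 : 0 ≤ x) (h1 : x ≤ 1) :
    (1 + x) * log (1 + x) - x * log x ≤ 2 * log 2 * √x := by
  rcases h0.eq_or_lt with rfl | hx
  · simp
  set L : ℝ → ℝ := fun x ↦ ((1 + x) * log (1 + x) - x * log x) / √x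
  have hmono : MonotoneOn L (Set.Ioc 0 1) := by
    refine monotoneOn_of_hasDerivWithinAt_nonneg (convex_Ioc 0 1)
      (f' := fun y ↦ ((y - 1) * log (1 + y) - y * log y) / (2 * y * √y)) ?_ ?_ ?_
    · exact fun y hy ↦
        (hasDerivAt_one_add_mul_log_one_add_sub_mul_log_div_sqrt hy.1).continuousAt.continuousWithinAt
    · rw [interior_Ioc]
      exact fun y hy ↦
        (hasDerivAt_one_add_mul_log_one_add_sub_mul_log_div_sqrt hy.1).hasDerivWithinAt
    · rw [interior_Ioc]
      rintro y ⟨hy0, hy1⟩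
      have hnum := one_sub_mul_log_one_add_le_neg_mul_log hy0.le hy1.le
      exact div_nonneg (by linarith) (by positivity)
  have h := hmono ⟨hx, h1⟩ ⟨one_pos, le_rfl⟩ h1
  have hL1 : L 1 = 2 * log 2 := by norm_num [L]
  rwa [hL1, div_le_iff₀ (sqrt_pos.2 hx)] at h

lemma add_mul_log_add_sub_mul_log_sub_mul_log_le {a b : ℝ} (ha : 0 ≤ a) (hb : 0 ≤ b) :
    (a + b) * log (a + b) - a * log a - b * log b ≤ 2 * log 2 * √(a * b) := by
  wlog hba : b ≤ a generalizing a b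
  · have h := this hb ha (le_of_not_ge hba)
    rw [add_comm b a, mul_comm b a] at h
    linarith
  rcases hb.eq_or_lt with rfl | hb
  · simp
  have ha : 0 < a := hb.trans_le hba
  have h := one_add_mul_log_one_add_sub_mul_log_le (div_nonneg hb.le ha.le) ((div_le_one ha).2 hba)
  have hone_add : 1 + b / a = (a + b) / a := by field_simp
  rw [hone_add, log_div (by positivity) ha.ne', log_div hb.ne' ha.ne', sqrt_div' _ ha.le] at h
  have hsa := sqrt_pos.2 ha
  field_simp at h
  rw [sqrt_mul ha.le]
  refine le_of_mul_le_mul_right ?_ hsa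
  linear_combination h - 2 * log 2 * √b * mul_self_sqrt ha.le

lemma add_div_two_le_mul_logb_add_mul_logb_add_sqrt {a b : ℝ} (ha : 0 ≤ a) (hb : 0 ≤ b) :
    (a + b) / 2 ≤ 1 / 2 * a * logb 2 (a / (1 / 2 * (a + b)))
      + 1 / 2 * b * logb 2 (b / (1 / 2 * (a + b))) + √(a * b) := by
  rcases (add_nonneg ha hb).eq_or_lt with hab | hab
  · simp [(by linarith : a = 0), (by linarith : b = 0)]
  set m := 1 / 2 * (a + b) with hm
  have hm0 : 0 < m := by positivity
  have hlogm : log m = log (a + b) - log 2 := by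
    rw [hm, one_div, ← div_eq_inv_mul, log_div hab.ne' two_ne_zero]
  have hsplit : ∀ {x : ℝ}, x * log (x / m) = x * log x - x * log m := by
    intro x
    rcases eq_or_ne x 0 with rfl | hx
    · simp
    rw [log_div hx hm0.ne']
    ring
  have hlog2 := log_pos one_lt_two
  have key : (a + b) / 2 * log 2 ≤
      1 / 2 * (a * log (a / m)) + 1 / 2 * (b * log (b / m)) + √(a * b) * log 2 := by
    rw [hsplit, hsplit, hlogm]
    linarith [add_mul_log_add_sub_mul_log_sub_mul_log_le ha hb]
  calc (a + b) / 2 = (a + b) / 2 * log 2 / log 2 := by field_simp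
    _ ≤ (1 / 2 * (a * log (a / m)) + 1 / 2 * (b * log (b / m)) + √(a * b) * log 2) / log 2 := by
        gcongr
    _ = _ := by simp only [logb]; field_simp

/-- I(W) + Z(W) ≥ 1. -/
theorem symCap_add_bhatt_ge_one {Y : Type*} [Fintype Y]
    (W : Y → ZMod 2 → ℝ) (hW : IsBDMC W) :
    1 ≤ symCap W + bhatt W := by
  obtain ⟨hnonneg, hsum⟩ := hW
  calc (1 : ℝ) = ∑ y, (W y 0 + W y 1) / 2 := by
        rw [← Finset.sum_div, Finset.sum_add_distrib, hsum 0, hsum 1]; norm_num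
    _ ≤ ∑ y, (∑ x : ZMod 2, 1 / 2 * W y x * logb 2 (W y x / (1 / 2 * (W y 0 + W y 1)))
          + √(W y 0 * W y 1)) := by
        gcongr with y
        rw [show ∀ f : ZMod 2 → ℝ, ∑ x, f x = f 0 + f 1 from Fin.sum_univ_two]
        exact add_div_two_le_mul_logb_add_mul_logb_add_sqrt (hnonneg y 0) (hnonneg y 1)
    _ = symCap W + bhatt W := Finset.sum_add_distrib
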